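/- Let d ≥ 1 and let R₀ be a Borel subset of (-1/2, 1/2]^d that contains an open neighborhood of the origin and satisfies the boundary condition. Let Δₙ and ₛΔₙ be d × d diagonal matrices with positive diagonal entries λ₁⁽ⁿ⁾, …, λ_d⁽ⁿ⁾ and ₛλ₁⁽ⁿ⁾, …, ₛλ_d⁽ⁿ⁾ respectively, satisfying Assumption A.2: Σᵢ 1/ₛλᵢ⁽ⁿ⁾ + Σᵢ ₛλᵢ⁽ⁿ⁾/λᵢ⁽ⁿ⁾ + det(ₛΔₙ)^{(d+1)/d}/det(Δₙ) → 0 and max₁≤i≤d λᵢ⁽ⁿ⁾ = O(min₁≤i≤d λᵢ⁽ⁿ⁾). Define J_OL = {i ∈ Z^d : i + ₛΔₙR₀ ⊆ ΔₙR₀}, and for k ∈ Z^d define Jₙ(k) = #{i ∈ J_OL : i + k + ₛΔₙR₀ ⊆ ΔₙR₀} and Eₙ = {k = (k₁,…,k_d) ∈ Z^d : |k_j| ≤ ₛλ_j⁽ⁿ⁾ for j = 1,…,d}. Then max_{k ∈ Eₙ} |1 − Jₙ(k)/#J_OL| → 0 as n → ∞ (in particular #J_OL > 0 for all large n). -/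

import Mathlib

/-!
Rescale by `Λ = diag lam`: a position `v` belongs to `J_OL` iff `Λ⁻¹(v + ₛΔ R₀) ⊆ R₀`, and
`Λ⁻¹ ₛΔ R₀` has sup-norm radius at most `a / 6`, where `a = 3 ∑ ₛλᵢ / λᵢ → 0`. Positions whose
rescaled point `Λ⁻¹ v` has distance `> a / 2` to `R₀ᶜ` stay in `J_OL` after every shift
`k ∈ Eₙ`, and they include all lattice points of a box of volume `≍ det Λ` around the origin.
For any other `v ∈ J_OL` the segment from `Λ⁻¹ v` to a nearby point of `R₀ᶜ` crosses the
boundary of `R₀`, so `Λ⁻¹ v` lies within `3a/2` of one of the `O(a^{1-d})` grid cubes of side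
`a` meeting both `R₀` and its complement; each such cube accounts for `O(a^d det Λ)` positions.
Hence `#J_OL - Jₙ(k) = O(a det Λ) = o(#J_OL)` uniformly in `k`.
-/

open Set Metric Filter Topology

lemma Set.ncard_univ_pi {ι : Type*} [Fintype ι] {α : ι → Type*} (s : ∀ i, Set (α i)) :
    (univ.pi s).ncard = ∏ i, (s i).ncard := by
  rw [← Nat.card_coe_set_eq, Nat.card_congr (Equiv.Set.univPi s), Nat.card_pi]
  simp only [Nat.card_coe_set_eq]

lemma setOf_int_abs_sub_le_eq_Icc (c r : ℝ) :
    {t : ℤ | |(t : ℝ) - c| ≤ r} = ↑(Finset.Icc ⌈c - r⌉ ⌊c + r⌋) := by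
  ext t
  simp only [abs_sub_le_iff, mem_ofPred_eq, Finset.coe_Icc, mem_Icc, Int.ceil_le, Int.le_floor]
  constructor <;> rintro ⟨h₁, h₂⟩ <;> constructor <;> linarith

lemma ncard_setOf_int_abs_sub_le_eq (c r : ℝ) :
    ({t : ℤ | |(t : ℝ) - c| ≤ r}.ncard : ℝ) = max ((⌊c + r⌋ : ℝ) + 1 - ⌈c - r⌉) 0 := by
  rw [setOf_int_abs_sub_le_eq_Icc, ncard_coe_finset, Int.card_Icc, ← Int.cast_natCast,
    Int.toNat_eq_max]
  push_cast
  rfl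

lemma ncard_setOf_int_abs_sub_le_le (c : ℝ) {r : ℝ} (hr : 0 ≤ r) :
    ({t : ℤ | |(t : ℝ) - c| ≤ r}.ncard : ℝ) ≤ 2 * r + 1 := by
  rw [ncard_setOf_int_abs_sub_le_eq]
  have := Int.floor_le (c + r)
  have := Int.le_ceil (c - r)
  exact max_le (by linarith) (by linarith)

lemma le_ncard_setOf_int_abs_le (r : ℝ) : r ≤ ({t : ℤ | |(t : ℝ)| ≤ r}.ncard : ℝ) := by
  rcases lt_or_ge r 0 with hr | hr
  · exact hr.le.trans (Nat.cast_nonneg _)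
  have h := ncard_setOf_int_abs_sub_le_eq 0 r
  simp only [sub_zero, zero_add, zero_sub, Int.ceil_neg, Int.cast_neg] at h
  rw [h]
  have := Int.lt_floor_add_one r
  have : (0 : ℝ) ≤ ⌊r⌋ := by exact_mod_cast Int.floor_nonneg.2 hr
  exact le_max_of_le_left (by linarith)

section LatticeBall

variable {ι : Type*} [Fintype ι] {lam c : ι → ℝ} {r : ℝ}

def latticeBall (lam c : ι → ℝ) (r : ℝ) : Set (ι → ℤ) :=
  {v | dist (fun i => (v i : ℝ) / lam i) c ≤ r}

lemma latticeBall_eq_pi (hlam : ∀ i, 0 < lam i) (hr : 0 ≤ r) :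
    latticeBall lam c r = univ.pi fun i => {t : ℤ | |(t : ℝ) - lam i * c i| ≤ r * lam i} := by
  ext v
  simp only [latticeBall, mem_ofPred_eq, dist_pi_le_iff hr, Real.dist_eq, mem_univ_pi]
  refine forall_congr' fun i => ?_
  rw [show (v i : ℝ) / lam i - c i = ((v i : ℝ) - lam i * c i) / lam i by
      rw [sub_div, mul_div_cancel_left₀ _ (hlam i).ne'],
    abs_div, abs_of_pos (hlam i), div_le_iff₀ (hlam i)]

lemma latticeBall_finite (hlam : ∀ i, 0 < lam i) (hr : 0 ≤ r) : (latticeBall lam c r).Finite := by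
  rw [latticeBall_eq_pi hlam hr]
  exact Finite.pi fun i => setOf_int_abs_sub_le_eq_Icc _ _ ▸ Finset.finite_toSet _

lemma ncard_latticeBall_le (hlam : ∀ i, 0 < lam i) (hr : 0 ≤ r) :
    ((latticeBall lam c r).ncard : ℝ) ≤ ∏ i, (2 * r * lam i + 1) := by
  rw [latticeBall_eq_pi hlam hr, Set.ncard_univ_pi, Nat.cast_prod]
  gcongr with i
  rw [mul_assoc]
  exact ncard_setOf_int_abs_sub_le_le _ (mul_nonneg hr (hlam i).le)

lemma prod_le_ncard_latticeBall_zero (hlam : ∀ i, 0 < lam i) (hr : 0 ≤ r) :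
    ∏ i, r * lam i ≤ (latticeBall lam 0 r).ncard := by
  rw [latticeBall_eq_pi hlam hr, Set.ncard_univ_pi, Nat.cast_prod]
  gcongr with i
  · exact fun i _ => mul_nonneg hr (hlam i).le
  · simpa only [Pi.zero_apply, mul_zero, sub_zero] using le_ncard_setOf_int_abs_le _

end LatticeBall

theorem exists_mem_segment_frontier {E : Type*} [NormedAddCommGroup E] [NormedSpace ℝ E]
    {s : Set E} {p q : E} (hp : p ∈ s) (hq : q ∉ s) :
    ∃ w ∈ segment ℝ p q, w ∈ frontier s := by
  by_contra! h
  have hint : ∀ w ∈ segment ℝ p q, w ∈ closure s → w ∈ interior s :=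
    fun w hw hc => by_contra fun hi => h w hw ⟨hc, hi⟩
  have hseg := (convex_segment p q).isPreconnected.subset_of_closure_inter_subset isOpen_interior
    ⟨p, left_mem_segment ℝ p q, hint p (left_mem_segment ℝ p q) (subset_closure hp)⟩
    fun w ⟨hw, hws⟩ => hint w hws (closure_mono interior_subset hw)
  exact hq (interior_subset (hseg (right_mem_segment ℝ p q)))

section GridCubes

variable {ι : Type*} {a : ℝ}

def gridCube (a : ℝ) (j : ι → ℤ) : Set (ι → ℝ) :=
  univ.pi fun i => Icc (a * j i) (a * (j i + 1))

def boundaryCubes (a : ℝ) (R : Set (ι → ℝ)) : Set (ι → ℤ) :=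
  {j | (gridCube a j ∩ closure R).Nonempty ∧ (gridCube a j ∩ closure Rᶜ).Nonempty}

lemma mem_gridCube_floor (ha : 0 < a) (w : ι → ℝ) : w ∈ gridCube a fun i => ⌊w i / a⌋ := by
  intro i _
  constructor
  · rw [← le_div_iff₀' ha]
    exact Int.floor_le _
  · rw [← div_le_iff₀' ha]
    exact (Int.lt_floor_add_one _).le

variable [Fintype ι]

lemma dist_le_of_mem_gridCube (ha : 0 ≤ a) {j : ι → ℤ} {w : ι → ℝ} (hw : w ∈ gridCube a j) :
    dist w (fun i => a * j i) ≤ a := by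
  refine (dist_pi_le_iff ha).2 fun i => ?_
  obtain ⟨h₁, h₂⟩ := hw i (mem_univ i)
  rw [Real.dist_eq, abs_le]
  constructor <;> linarith

lemma exists_mem_boundaryCubes_of_mem_frontier (ha : 0 < a) {R : Set (ι → ℝ)} {w : ι → ℝ}
    (hw : w ∈ frontier R) : ∃ j ∈ boundaryCubes a R, dist w (fun i => a * j i) ≤ a := by
  rw [frontier_eq_closure_inter_closure] at hw
  have hcube := mem_gridCube_floor ha w
  exact ⟨_, ⟨⟨w, hcube, hw.1⟩, ⟨w, hcube, hw.2⟩⟩, dist_le_of_mem_gridCube ha.le hcube⟩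

lemma boundaryCubes_subset_latticeBall (ha : 0 < a) {R : Set (ι → ℝ)} {r : ℝ}
    (hR : R ⊆ closedBall 0 r) : boundaryCubes a R ⊆ latticeBall (fun _ => a⁻¹) 0 (r + a) := by
  rintro j ⟨⟨w, hwj, hwR⟩, -⟩
  have hw : dist w 0 ≤ r := isClosed_closedBall.closure_subset_iff.2 hR hwR
  have hj := dist_le_of_mem_gridCube ha.le hwj
  simp only [latticeBall, div_inv_eq_mul, mem_ofPred_eq, mul_comm _ a]
  linarith [dist_triangle (fun i => a * j i) w 0, dist_comm w (fun i => a * j i)]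

lemma boundaryCubes_finite (ha : 0 < a) {R : Set (ι → ℝ)} {r : ℝ} (hr : 0 ≤ r)
    (hR : R ⊆ closedBall 0 r) : (boundaryCubes a R).Finite :=
  (latticeBall_finite (fun _ => inv_pos.2 ha) (by linarith)).subset
    (boundaryCubes_subset_latticeBall ha hR)

end GridCubes

section Shifts

variable {ι : Type*} {lam slam : ι → ℝ} {R : Set (ι → ℝ)} {a : ℝ}

/-- The index set `J_OL` of the paper, for `Δ = diag lam`, `ₛΔ = diag slam`. -/
def fittingShifts (lam slam : ι → ℝ) (R : Set (ι → ℝ)) : Set (ι → ℤ) :=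
  {v | (fun x m => (v m : ℝ) + slam m * x m) '' R ⊆ (fun x m => lam m * x m) '' R}

lemma setOf_image_subset_image_eq :
    {v : ι → ℤ | (fun x m => (v m : ℝ) + slam m * x m) '' R ⊆ (fun x m => lam m * x m) '' R} =
      fittingShifts lam slam R :=
  rfl

lemma setOf_image_subset_image_and_eq (k : ι → ℤ) :
    {v : ι → ℤ | (fun x m => (v m : ℝ) + slam m * x m) '' R ⊆ (fun x m => lam m * x m) '' R ∧
      (fun x m => ((v m : ℝ) + (k m : ℝ)) + slam m * x m) '' R ⊆ (fun x m => lam m * x m) '' R} =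
      fittingShifts lam slam R ∩ (· + k) ⁻¹' fittingShifts lam slam R := by
  ext v
  simp only [fittingShifts, mem_inter_iff, mem_preimage, mem_ofPred_eq, Pi.add_apply,
    Int.cast_add]

lemma mem_fittingShifts_iff (hlam : ∀ i, 0 < lam i) {v : ι → ℤ} :
    v ∈ fittingShifts lam slam R ↔
      ∀ x ∈ R, (fun i => ((v i : ℝ) + slam i * x i) / lam i) ∈ R := by
  refine ⟨fun h x hx => ?_, fun h => ?_⟩
  · obtain ⟨y, hy, hyx⟩ := h ⟨x, hx, rfl⟩
    convert hy using 1
    funext i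
    have hi : lam i * y i = v i + slam i * x i := congrFun hyx i
    rw [← hi, mul_div_cancel_left₀ _ (hlam i).ne']
  · rintro _ ⟨x, hx, rfl⟩
    exact ⟨_, h x hx, funext fun i => mul_div_cancel₀ _ (hlam i).ne'⟩

lemma div_mem_of_mem_fittingShifts (hlam : ∀ i, 0 < lam i) (h0 : 0 ∈ R) {v : ι → ℤ}
    (hv : v ∈ fittingShifts lam slam R) : (fun i => (v i : ℝ) / lam i) ∈ R := by
  simpa using (mem_fittingShifts_iff hlam).1 hv 0 h0

variable [Fintype ι]

def deepShifts (lam : ι → ℝ) (ρ : ℝ) (R : Set (ι → ℝ)) : Set (ι → ℤ) :=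
  {v | closedBall (fun i => (v i : ℝ) / lam i) ρ ⊆ R}

lemma fittingShifts_subset_latticeBall (hlam : ∀ i, 0 < lam i) (h0 : 0 ∈ R) {r : ℝ}
    (hR : R ⊆ closedBall 0 r) : fittingShifts lam slam R ⊆ latticeBall lam 0 r :=
  fun _ hv => hR (div_mem_of_mem_fittingShifts hlam h0 hv)

lemma abs_le_of_mem_closedBall_zero {x : ι → ℝ} {r : ℝ} (hx : x ∈ closedBall 0 r) (i : ι) :
    |x i| ≤ r :=
  (norm_le_pi_norm x i).trans (mem_closedBall_zero_iff.1 hx)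

lemma add_mem_fittingShifts_of_mem_deepShifts (hR : R ⊆ closedBall 0 (1 / 2))
    (hlam : ∀ i, 0 < lam i) (hslam : ∀ i, 0 ≤ slam i) (ha : 0 ≤ a)
    (hasl : ∀ i, 3 * slam i ≤ a * lam i) {v k : ι → ℤ} (hv : v ∈ deepShifts lam (a / 2) R)
    (hk : ∀ i, |(k i : ℝ)| ≤ slam i) : v + k ∈ fittingShifts lam slam R := by
  refine (mem_fittingShifts_iff hlam).2 fun x hx =>
    hv <| (dist_pi_le_iff (by linarith)).2 fun i => ?_
  have hxi := abs_le_of_mem_closedBall_zero (hR hx) i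
  have hshift : |(k i : ℝ) + slam i * x i| ≤ a / 2 * lam i :=
    calc |(k i : ℝ) + slam i * x i| ≤ |(k i : ℝ)| + |slam i * x i| := abs_add_le _ _
      _ = |(k i : ℝ)| + slam i * |x i| := by rw [abs_mul, abs_of_nonneg (hslam i)]
      _ ≤ slam i + slam i * (1 / 2) := by gcongr; exacts [hk i, hslam i]
      _ ≤ a / 2 * lam i := by linarith [hasl i]
  rw [Real.dist_eq, Pi.add_apply, Int.cast_add, ← sub_div, add_assoc, add_sub_cancel_left,
    abs_div, abs_of_pos (hlam i), div_le_iff₀ (hlam i)]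
  exact hshift

lemma latticeBall_subset_deepShifts {δ ρ r : ℝ} (hRδ : closedBall 0 δ ⊆ R) (h : ρ + r ≤ δ) :
    latticeBall lam 0 r ⊆ deepShifts lam ρ R :=
  fun v hv => (closedBall_subset_closedBall' (by
    have : dist (fun i => (v i : ℝ) / lam i) 0 ≤ r := hv
    linarith)).trans hRδ

lemma fittingShifts_diff_deepShifts_subset (hlam : ∀ i, 0 < lam i) (h0 : 0 ∈ R) (ha : 0 < a) :
    fittingShifts lam slam R \ deepShifts lam (a / 2) R ⊆
      ⋃ j ∈ boundaryCubes a R, latticeBall lam (fun i => a * j i) (3 / 2 * a) := by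
  rintro v ⟨hvJ, hvG⟩
  obtain ⟨q, hq, hqR⟩ := not_subset.1 hvG
  obtain ⟨w, hw, hwR⟩ := exists_mem_segment_frontier (div_mem_of_mem_fittingShifts hlam h0 hvJ) hqR
  obtain ⟨j, hj, hwj⟩ := exists_mem_boundaryCubes_of_mem_frontier ha hwR
  have hwv := segment_subset_closedBall_left _ _ hw
  rw [mem_closedBall, dist_comm] at hq hwv
  refine mem_biUnion hj
    (show dist (fun i => (v i : ℝ) / lam i) (fun i => a * j i) ≤ 3 / 2 * a from ?_)
  linarith [dist_triangle (fun i => (v i : ℝ) / lam i) w (fun i => a * j i)]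

end Shifts

lemma abs_one_sub_div_le {x y U L : ℝ} (hxy : x ≤ y) (hU : y - x ≤ U) (hL : 0 < L)
    (hLy : L ≤ y) : |1 - x / y| ≤ U / L := by
  have hy : 0 < y := hL.trans_le hLy
  rw [one_sub_div hy.ne', abs_of_nonneg (div_nonneg (by linarith) hy.le)]
  exact div_le_div₀ (by linarith) hU hL hLy

section Counting

variable {ι : Type*} [Fintype ι] {lam slam : ι → ℝ} {R : Set (ι → ℝ)} {a : ℝ}

lemma fittingShifts_finite (hlam : ∀ i, 0 < lam i) (h0 : 0 ∈ R)
    (hR : R ⊆ closedBall 0 (1 / 2)) : (fittingShifts lam slam R).Finite :=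
  (latticeBall_finite hlam (by norm_num)).subset (fittingShifts_subset_latticeBall hlam h0 hR)

lemma deepShifts_subset_fittingShifts (hR : R ⊆ closedBall 0 (1 / 2))
    (hlam : ∀ i, 0 < lam i) (hslam : ∀ i, 0 ≤ slam i) (ha : 0 ≤ a)
    (hasl : ∀ i, 3 * slam i ≤ a * lam i) :
    deepShifts lam (a / 2) R ⊆ fittingShifts lam slam R := fun v hv => by
  simpa using add_mem_fittingShifts_of_mem_deepShifts hR hlam hslam ha hasl hv (k := 0)
    fun i => by simpa using hslam i

lemma le_ncard_fittingShifts {δ : ℝ} (hR : R ⊆ closedBall 0 (1 / 2)) (hRδ : closedBall 0 δ ⊆ R)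
    (hlam : ∀ i, 0 < lam i) (hslam : ∀ i, 0 ≤ slam i) (ha : 0 ≤ a) (haδ : a ≤ δ)
    (hasl : ∀ i, 3 * slam i ≤ a * lam i) :
    (δ / 2) ^ Fintype.card ι * ∏ i, lam i ≤ (fittingShifts lam slam R).ncard := by
  have h0 : (0 : ι → ℝ) ∈ R := hRδ (mem_closedBall_self (ha.trans haδ))
  calc (δ / 2) ^ Fintype.card ι * ∏ i, lam i = ∏ i, δ / 2 * lam i := by
        rw [Finset.prod_mul_distrib, Finset.prod_const, Finset.card_univ]
    _ ≤ (latticeBall lam 0 (δ / 2)).ncard := prod_le_ncard_latticeBall_zero hlam (by linarith)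
    _ ≤ (fittingShifts lam slam R).ncard := by
        gcongr
        · exact fittingShifts_finite hlam h0 hR
        · exact (latticeBall_subset_deepShifts hRδ (by linarith)).trans
            (deepShifts_subset_fittingShifts hR hlam hslam ha hasl)

lemma ncard_sub_ncard_shift_le (hR : R ⊆ closedBall 0 (1 / 2)) (h0 : 0 ∈ R)
    (hlam : ∀ i, 0 < lam i) (hslam : ∀ i, 0 ≤ slam i) (ha : 0 ≤ a)
    (hasl : ∀ i, 3 * slam i ≤ a * lam i) {k : ι → ℤ} (hk : ∀ i, |(k i : ℝ)| ≤ slam i) :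
    ((fittingShifts lam slam R).ncard : ℝ) -
        (fittingShifts lam slam R ∩ (· + k) ⁻¹' fittingShifts lam slam R).ncard ≤
      (fittingShifts lam slam R \ deepShifts lam (a / 2) R).ncard := by
  have hJ := fittingShifts_finite (slam := slam) hlam h0 hR
  rw [← Set.ncard_inter_add_ncard_sdiff_eq_ncard _ ((· + k) ⁻¹' fittingShifts lam slam R) hJ,
    Nat.cast_add, add_sub_cancel_left]
  gcongr
  · exact hJ.sdiff
  · exact fun v hv => add_mem_fittingShifts_of_mem_deepShifts hR hlam hslam ha hasl hv hk

lemma ncard_fittingShifts_diff_deepShifts_le {C : ℝ} (hR : R ⊆ closedBall 0 (1 / 2))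
    (h0 : 0 ∈ R) (hlam : ∀ i, 0 < lam i) (ha : 0 < a) (hal : ∀ i, 1 ≤ a * lam i)
    (hB : ((boundaryCubes a R).ncard : ℝ) ≤ C * a ^ ((1 : ℤ) - Fintype.card ι)) :
    ((fittingShifts lam slam R \ deepShifts lam (a / 2) R).ncard : ℝ) ≤
      C * 4 ^ Fintype.card ι * a * ∏ i, lam i := by
  have hBfin := boundaryCubes_finite ha (by norm_num) hR
  have hballs : ∀ j : ι → ℤ, ((latticeBall lam (fun i => a * j i) (3 / 2 * a)).ncard : ℝ) ≤
      (4 * a) ^ Fintype.card ι * ∏ i, lam i := fun j => by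
    calc _ ≤ ∏ i, (2 * (3 / 2 * a) * lam i + 1) := ncard_latticeBall_le hlam (by linarith)
      _ ≤ ∏ i, (4 * a) * lam i := by
          gcongr with i
          · exact fun i _ => by nlinarith [hal i, hlam i]
          · linarith [hal i]
      _ = (4 * a) ^ Fintype.card ι * ∏ i, lam i := by
          rw [Finset.prod_mul_distrib, Finset.prod_const, Finset.card_univ]
  have hcover : fittingShifts lam slam R \ deepShifts lam (a / 2) R ⊆
      ⋃ j ∈ hBfin.toFinset, latticeBall lam (fun i => a * j i) (3 / 2 * a) := by
    simpa only [Finite.mem_toFinset] using fittingShifts_diff_deepShifts_subset hlam h0 ha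
  have hcount := (ncard_le_ncard hcover (hBfin.toFinset.finite_toSet.biUnion fun j _ =>
    latticeBall_finite hlam (by linarith))).trans (Finset.set_ncard_biUnion_le _ _)
  have hpow : a ^ ((1 : ℤ) - Fintype.card ι) * a ^ Fintype.card ι = a := by
    rw [← zpow_natCast, ← zpow_add₀ ha.ne', sub_add_cancel, zpow_one]
  calc ((fittingShifts lam slam R \ deepShifts lam (a / 2) R).ncard : ℝ)
      ≤ ∑ j ∈ hBfin.toFinset, ((latticeBall lam (fun i => a * j i) (3 / 2 * a)).ncard : ℝ) := by
        exact_mod_cast hcount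
    _ ≤ (boundaryCubes a R).ncard * ((4 * a) ^ Fintype.card ι * ∏ i, lam i) := by
        rw [ncard_eq_toFinset_card _ hBfin, ← nsmul_eq_mul]
        exact Finset.sum_le_card_nsmul _ _ _ fun j _ => hballs j
    _ ≤ C * a ^ ((1 : ℤ) - Fintype.card ι) * ((4 * a) ^ Fintype.card ι * ∏ i, lam i) := by
        gcongr
        exact mul_nonneg (pow_nonneg (by linarith) _) (Finset.prod_nonneg fun i _ => (hlam i).le)
    _ = C * 4 ^ Fintype.card ι * (a ^ ((1 : ℤ) - Fintype.card ι) * a ^ Fintype.card ι) *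
          ∏ i, lam i := by
        rw [mul_pow]
        ring
    _ = C * 4 ^ Fintype.card ι * a * ∏ i, lam i := by rw [hpow]

end Counting

section Estimate

variable {ι : Type*} [Fintype ι] {lam slam : ι → ℝ} {R : Set (ι → ℝ)} {a : ℝ}

theorem fittingShifts_ncard_pos_and_ratio_le {C δ : ℝ} (hR : R ⊆ closedBall 0 (1 / 2))
    (hRδ : closedBall 0 δ ⊆ R) (hlam : ∀ i, 0 < lam i) (hslam : ∀ i, 1 ≤ slam i) (ha : 0 < a)
    (haδ : a ≤ δ) (hasl : ∀ i, 3 * slam i ≤ a * lam i)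
    (hB : ((boundaryCubes a R).ncard : ℝ) ≤ C * a ^ ((1 : ℤ) - Fintype.card ι)) :
    0 < (fittingShifts lam slam R).ncard ∧ ∀ k : ι → ℤ, (∀ i, |(k i : ℝ)| ≤ slam i) →
      |1 - ((fittingShifts lam slam R ∩ (· + k) ⁻¹' fittingShifts lam slam R).ncard : ℝ) /
        (fittingShifts lam slam R).ncard| ≤ C * (8 / δ) ^ Fintype.card ι * a := by
  have hδ : 0 < δ := ha.trans_le haδ
  have h0 : (0 : ι → ℝ) ∈ R := hRδ (mem_closedBall_self hδ.le)
  have hslam0 : ∀ i, 0 ≤ slam i := fun i => zero_le_one.trans (hslam i)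
  have hal : ∀ i, 1 ≤ a * lam i := fun i => by linarith [hslam i, hasl i]
  have hP : 0 < ∏ i, lam i := Finset.prod_pos fun i _ => hlam i
  have hlow := le_ncard_fittingShifts hR hRδ hlam hslam0 ha.le haδ hasl
  have hlowpos : 0 < (δ / 2) ^ Fintype.card ι * ∏ i, lam i := by positivity
  refine ⟨by exact_mod_cast hlowpos.trans_le hlow, fun k hk => ?_⟩
  calc _ ≤ (C * 4 ^ Fintype.card ι * a * ∏ i, lam i) / ((δ / 2) ^ Fintype.card ι * ∏ i, lam i) :=
        abs_one_sub_div_le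
          (by exact_mod_cast ncard_inter_le_ncard_left _ _ (fittingShifts_finite hlam h0 hR))
          ((ncard_sub_ncard_shift_le hR h0 hlam hslam0 ha.le hasl hk).trans
            (ncard_fittingShifts_diff_deepShifts_le hR h0 hlam ha hal hB)) hlowpos hlow
    _ = C * (8 / δ) ^ Fintype.card ι * a := by
        rw [show (8 : ℝ) = 4 * 2 by norm_num, div_pow, div_pow, mul_pow]
        field_simp

end Estimate

lemma tendsto_zero_of_tendsto_add_add {α : Type*} {l : Filter α} {f g h : α → ℝ} (hf : ∀ n, 0 ≤ f n)
    (hg : ∀ n, 0 ≤ g n) (hh : ∀ n, 0 ≤ h n) (hlim : Tendsto (fun n => f n + g n + h n) l (𝓝 0)) :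
    Tendsto f l (𝓝 0) ∧ Tendsto g l (𝓝 0) :=
  ⟨squeeze_zero hf (fun n => by linarith [hg n, hh n]) hlim,
    squeeze_zero hg (fun n => by linarith [hf n, hh n]) hlim⟩

lemma eventually_one_le_of_tendsto_sum_one_div {α ι : Type*} [Fintype ι] {l : Filter α}
    {s : α → ι → ℝ} (hs : ∀ n i, 0 < s n i)
    (hlim : Tendsto (fun n => ∑ i, 1 / s n i) l (𝓝 0)) : ∀ᶠ n in l, ∀ i, 1 ≤ s n i := by
  filter_upwards [hlim.eventually_lt_const one_pos] with n hn i
  have hi : 1 / s n i < 1 :=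
    (Finset.single_le_sum (fun j _ => (one_div_pos.2 (hs n j)).le) (Finset.mem_univ i)).trans_lt hn
  exact ((div_lt_one (hs n i)).1 hi).le

lemma le_sum_div_mul {ι : Type*} [Fintype ι] {f g : ι → ℝ} (hf : ∀ i, 0 ≤ f i)
    (hg : ∀ i, 0 < g i) (i : ι) : f i ≤ (∑ j, f j / g j) * g i := by
  rw [← div_le_iff₀ (hg i)]
  exact Finset.single_le_sum (fun j _ => div_nonneg (hf j) (hg j).le) (Finset.mem_univ i)

section Asymptotics

variable {ι : Type*} [Fintype ι] [Nonempty ι] {R : Set (ι → ℝ)} {lam slam : ℕ → ι → ℝ}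

theorem eventually_fittingShifts_ncard_pos_and_ratio_le {C : ℝ} (hR : R ⊆ closedBall 0 (1 / 2))
    (hR0 : R ∈ 𝓝 0)
    (hB : ∀ a : ℝ, 0 < a → a ≤ 1 →
      ((boundaryCubes a R).ncard : ℝ) ≤ C * a ^ ((1 : ℤ) - Fintype.card ι))
    (hlam : ∀ n i, 0 < lam n i) (hslam : ∀ n i, 0 < slam n i)
    (hinv : Tendsto (fun n => ∑ i, 1 / slam n i) atTop (𝓝 0))
    (hratio : Tendsto (fun n => ∑ i, slam n i / lam n i) atTop (𝓝 0)) :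
    ∃ K : ℝ, ∀ᶠ n in atTop, 0 < (fittingShifts (lam n) (slam n) R).ncard ∧
      ∀ k : ι → ℤ, (∀ i, |(k i : ℝ)| ≤ slam n i) →
        |1 - ((fittingShifts (lam n) (slam n) R ∩
            (· + k) ⁻¹' fittingShifts (lam n) (slam n) R).ncard : ℝ) /
          (fittingShifts (lam n) (slam n) R).ncard| ≤ K * ∑ i, slam n i / lam n i := by
  obtain ⟨r, hr, hball⟩ := Metric.mem_nhds_iff.1 hR0
  set δ := min (r / 2) 1
  have hRδ : closedBall 0 δ ⊆ R :=
    (closedBall_subset_ball ((min_le_left _ _).trans_lt (half_lt_self hr))).trans hball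
  refine ⟨C * (8 / δ) ^ Fintype.card ι * 3, ?_⟩
  filter_upwards [eventually_one_le_of_tendsto_sum_one_div hslam hinv,
    hratio.eventually_le_const (show 0 < δ / 3 by positivity)] with n hsl hsmall
  have hpos : 0 < ∑ i, slam n i / lam n i :=
    Finset.sum_pos (fun i _ => div_pos (hslam n i) (hlam n i)) Finset.univ_nonempty
  have hδ : 3 * ∑ i, slam n i / lam n i ≤ δ := by linarith
  simpa only [mul_assoc] using fittingShifts_ncard_pos_and_ratio_le hR hRδ (hlam n) hsl (by positivity) hδ
    (fun i => by linarith [le_sum_div_mul (fun j => (hslam n j).le) (hlam n) i])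
    (hB _ (by positivity) (hδ.trans (min_le_right _ _)))

end Asymptotics

theorem stmt_2_general (d : ℕ) (hd : 1 ≤ d)
    (R₀ : Set (Fin d → ℝ))
    (hsub : R₀ ⊆ Set.univ.pi fun _ => Set.Ioc (-(1/2) : ℝ) (1/2))
    (hnbhd : R₀ ∈ 𝓝 (0 : Fin d → ℝ))
    (hbdry : ∃ C : ℝ, 0 < C ∧ ∀ a : ℝ, 0 < a → a ≤ 1 →
      (Set.ncard {j : Fin d → ℤ |
        (Set.univ.pi (fun i => Set.Icc (a * (j i : ℝ)) (a * ((j i : ℝ) + 1))) ∩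
          closure R₀).Nonempty ∧
        (Set.univ.pi (fun i => Set.Icc (a * (j i : ℝ)) (a * ((j i : ℝ) + 1))) ∩
          closure R₀ᶜ).Nonempty} : ℝ) ≤ C * a ^ ((1 : ℤ) - d))
    (lam slam : ℕ → Fin d → ℝ)
    (hlpos : ∀ n i, 0 < lam n i) (hslpos : ∀ n i, 0 < slam n i)
    -- Assumption A.2 :
    (hA2 : Tendsto (fun n => (∑ i, 1 / slam n i) + (∑ i, slam n i / lam n i) +
        (∏ i, slam n i) ^ (((d : ℝ) + 1) / d) / ∏ i, lam n i) atTop (𝓝 0)) :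
    (∃ N : ℕ, ∀ n ≥ N, 0 < Set.ncard {v : Fin d → ℤ |
        (fun x m => (v m : ℝ) + slam n m * x m) '' R₀ ⊆ (fun x m => lam n m * x m) '' R₀}) ∧
    ∀ ε : ℝ, 0 < ε → ∃ N : ℕ, ∀ n ≥ N, ∀ k : Fin d → ℤ,
      (∀ j, |(k j : ℝ)| ≤ slam n j) →
      |1 - (Set.ncard {v : Fin d → ℤ |
          ((fun x m => (v m : ℝ) + slam n m * x m) '' R₀ ⊆
            (fun x m => lam n m * x m) '' R₀) ∧
          (fun x m => ((v m : ℝ) + (k m : ℝ)) + slam n m * x m) '' R₀ ⊆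
            (fun x m => lam n m * x m) '' R₀} : ℝ) /
        (Set.ncard {v : Fin d → ℤ |
          (fun x m => (v m : ℝ) + slam n m * x m) '' R₀ ⊆
            (fun x m => lam n m * x m) '' R₀} : ℝ)| < ε := by
  have : Nonempty (Fin d) := ⟨⟨0, hd⟩⟩
  obtain ⟨C, -, hC⟩ := hbdry
  have hR : R₀ ⊆ closedBall 0 (1 / 2) := fun x hx => (dist_pi_le_iff (by norm_num)).2 fun i => by
    simpa only [Real.dist_eq, Pi.zero_apply, sub_zero, abs_le] using
      (fun h => ⟨h.1.le, h.2⟩) (hsub hx i (mem_univ i))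
  obtain ⟨hinv, hratio⟩ := tendsto_zero_of_tendsto_add_add
    (fun n => Finset.sum_nonneg fun i _ => (one_div_pos.2 (hslpos n i)).le)
    (fun n => Finset.sum_nonneg fun i _ => (div_pos (hslpos n i) (hlpos n i)).le)
    (fun n => div_nonneg (Real.rpow_nonneg (Finset.prod_nonneg fun i _ => (hslpos n i).le) _)
      (Finset.prod_nonneg fun i _ => (hlpos n i).le)) hA2
  obtain ⟨K, hK⟩ := eventually_fittingShifts_ncard_pos_and_ratio_le hR hnbhd
    (fun a ha ha1 => by rw [Fintype.card_fin]; exact hC a ha ha1) hlpos hslpos hinv hratio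
  simp only [setOf_image_subset_image_eq, setOf_image_subset_image_and_eq]
  refine ⟨eventually_atTop.1 (hK.mono fun n h => h.1), fun ε hε => eventually_atTop.1 ?_⟩
  filter_upwards [hK, (hratio.const_mul K).eventually_lt_const (by simpa using hε)] with n hn hn'
  exact fun k hk => (hn.2 k hk).trans_lt hn'

/-- Lemma 9.4: the number of overlapping subsampling positions whose
`k`-translate also fits inside `Rₙ` is asymptotically the same as `#J_OL`,
uniformly over `k ∈ Eₙ`. -/
theorem stmt_2 (d : ℕ) (hd : 1 ≤ d)
    (R₀ : Set (Fin d → ℝ)) (hmeas : MeasurableSet R₀)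
    (hsub : R₀ ⊆ Set.univ.pi fun _ => Set.Ioc (-(1/2) : ℝ) (1/2))
    (hnbhd : R₀ ∈ 𝓝 (0 : Fin d → ℝ))
    (hbdry : ∃ C : ℝ, 0 < C ∧ ∀ a : ℝ, 0 < a → a ≤ 1 →
      (Set.ncard {j : Fin d → ℤ |
        (Set.univ.pi (fun i => Set.Icc (a * (j i : ℝ)) (a * ((j i : ℝ) + 1))) ∩
          closure R₀).Nonempty ∧
        (Set.univ.pi (fun i => Set.Icc (a * (j i : ℝ)) (a * ((j i : ℝ) + 1))) ∩
          closure R₀ᶜ).Nonempty} : ℝ) ≤ C * a ^ ((1 : ℤ) - d))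
    (lam slam : ℕ → Fin d → ℝ)
    (hlpos : ∀ n i, 0 < lam n i) (hslpos : ∀ n i, 0 < slam n i)
    -- Assumption A.2 :
    (hA2 : Tendsto (fun n => (∑ i, 1 / slam n i) + (∑ i, slam n i / lam n i) +
        (∏ i, slam n i) ^ (((d : ℝ) + 1) / d) / ∏ i, lam n i) atTop (𝓝 0))
    (hmaxmin : ∃ C : ℝ, ∀ n i j, lam n i ≤ C * lam n j) :
    (∃ N : ℕ, ∀ n ≥ N, 0 < Set.ncard {v : Fin d → ℤ |
        (fun x m => (v m : ℝ) + slam n m * x m) '' R₀ ⊆ (fun x m => lam n m * x m) '' R₀}) ∧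
    ∀ ε : ℝ, 0 < ε → ∃ N : ℕ, ∀ n ≥ N, ∀ k : Fin d → ℤ,
      (∀ j, |(k j : ℝ)| ≤ slam n j) →
      |1 - (Set.ncard {v : Fin d → ℤ |
          ((fun x m => (v m : ℝ) + slam n m * x m) '' R₀ ⊆
            (fun x m => lam n m * x m) '' R₀) ∧
          (fun x m => ((v m : ℝ) + (k m : ℝ)) + slam n m * x m) '' R₀ ⊆
            (fun x m => lam n m * x m) '' R₀} : ℝ) /
        (Set.ncard {v : Fin d → ℤ |
          (fun x m => (v m : ℝ) + slam n m * x m) '' R₀ ⊆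
            (fun x m => lam n m * x m) '' R₀} : ℝ)| < ε :=
  stmt_2_general d hd R₀ hsub hnbhd hbdry lam slam hlpos hslpos hA2
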